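/- arXiv:2208.05463 — 3 statements merged into one kernel-verified Lean document; each statement's English description precedes it below -/
import Mathlib

section
/- Let L_1, ..., L_n be finite lattices and L = L_1 × ... × L_n their product with the product order. If G_i ⊆ L_i \ {0̂} is a building set for L_i for each i, then the union ⋃_i G_i (where each G_i is embedded in L via X ↦ (0̂,...,X,...,0̂) in the i-th coordinate, ordered by the product order) is a building set for L. -/
/-- A building set for a lattice `L` with bottom element: a subset of `L \ {⊥}` such that
for every `X ∈ L`, the interval `[⊥, X]` is isomorphic as a poset to the product of the
intervals `[⊥, Z]` over the maximal elements `Z` of `G ∩ [⊥, X]`. -/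
def IsBuildingSet {L : Type*} [Lattice L] [OrderBot L] (G : Set L) : Prop :=
  (⊥ : L) ∉ G ∧
    ∀ X : L, Nonempty
      ((Set.Iic X) ≃o ((Z : {Z : L // Maximal (· ∈ G ∩ Set.Iic X) Z}) → Set.Iic Z.1))

/-- The embedding of `L i` into the product lattice, placing `⊥` in all other coordinates. -/
def latticeEmb {ι : Type*} [DecidableEq ι] (L : ι → Type*) [∀ i, Lattice (L i)]
    [∀ i, OrderBot (L i)] (i : ι) (x : L i) : ∀ j, L j :=
  Function.update (⊥ : ∀ j, L j) i x

section Helpers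

variable {ι : Type*} [DecidableEq ι] (L : ι → Type*) [∀ i, Lattice (L i)] [∀ i, OrderBot (L i)]

lemma latticeEmb_apply_self (i : ι) (x : L i) : latticeEmb L i x i = x :=
  Function.update_self ..

lemma latticeEmb_apply_ne {i k : ι} (h : k ≠ i) (x : L i) : latticeEmb L i x k = ⊥ :=
  Function.update_of_ne h ..

lemma latticeEmb_le_iff {i : ι} {x : L i} {Y : ∀ j, L j} :
    latticeEmb L i x ≤ Y ↔ x ≤ Y i := by
  simp [latticeEmb, update_le_iff]

lemma latticeEmb_eq_emb {i j : ι} {x : L i} {y : L j} (hx : x ≠ ⊥)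
    (h : latticeEmb L i x = latticeEmb L j y) : i = j := by
  by_contra hij
  have := congrFun h i
  rw [latticeEmb_apply_self, latticeEmb_apply_ne L hij] at this
  exact hx this

/-- Order iso transported along an equivalence of index types with pointwise order isos. -/
def piOrderIso {α β : Type*} {γ : α → Type*} {δ : β → Type*}
    [∀ a, Preorder (γ a)] [∀ b, Preorder (δ b)] (e : α ≃ β)
    (f : ∀ a, γ a ≃o δ (e a)) : (∀ a, γ a) ≃o (∀ b, δ b) where
  toEquiv := Equiv.piCongr e fun a => (f a).toEquiv
  map_rel_iff' := by
    intro g h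
    constructor
    · intro hle a
      have := hle (e a)
      rw [Equiv.piCongr_apply_apply, Equiv.piCongr_apply_apply] at this
      exact (f a).le_iff_le.mp this
    · intro hle b
      obtain ⟨a, rfl⟩ := e.surjective b
      rw [Equiv.piCongr_apply_apply, Equiv.piCongr_apply_apply]
      exact (f a).le_iff_le.mpr (hle a)

/-- Currying order iso for pi types over a sigma type. -/
def sigmaPiOrderIso {α : Type*} {σ : α → Type*} (τ : (Σ a, σ a) → Type*)
    [∀ p, Preorder (τ p)] : (∀ p, τ p) ≃o (∀ a, ∀ s, τ ⟨a, s⟩) where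
  toEquiv := Equiv.piCurry fun a s => τ ⟨a, s⟩
  map_rel_iff' := by
    intro f g
    constructor
    · intro h ⟨a, s⟩; exact h a s
    · intro h a s; exact h ⟨a, s⟩

/-- `Iic` of a product is the product of the `Iic`s. -/
def iicPiOrderIso (X : ∀ j, L j) : Set.Iic X ≃o ∀ j, Set.Iic (X j) where
  toFun f := fun j => ⟨f.1 j, f.2 j⟩
  invFun g := ⟨fun j => (g j).1, fun j => (g j).2⟩
  left_inv f := rfl
  right_inv g := rfl
  map_rel_iff' := by
    intro f g
    constructor
    · intro h j; exact h j
    · intro h j; exact h j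

/-- `Iic (latticeEmb L i x)` is isomorphic to `Iic x`. -/
def iicEmbOrderIso (i : ι) (x : L i) : Set.Iic (latticeEmb L i x) ≃o Set.Iic x where
  toFun f := ⟨f.1 i, by simpa [latticeEmb_apply_self] using (f.2 : f.1 ≤ _) i⟩
  invFun w := ⟨latticeEmb L i w.1, (latticeEmb_le_iff L).mpr (by
    rw [latticeEmb_apply_self]; exact w.2)⟩
  left_inv f := by
    apply Subtype.ext
    show latticeEmb L i (f.1 i) = f.1
    funext k
    by_cases hk : k = i
    · subst hk; exact latticeEmb_apply_self ..
    · rw [latticeEmb_apply_ne L hk]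
      have := (f.2 : f.1 ≤ _) k
      rw [latticeEmb_apply_ne L hk] at this
      exact (le_antisymm this bot_le).symm
  right_inv w := Subtype.ext (latticeEmb_apply_self ..)
  map_rel_iff' := by
    intro f g
    constructor
    · intro h k
      by_cases hk : k = i
      · subst hk; exact h
      · have := (f.2 : f.1 ≤ _) k
        rw [latticeEmb_apply_ne L hk] at this
        exact le_trans this bot_le
    · intro h; exact h i

end Helpers

section Max

variable {ι : Type*} [DecidableEq ι] {L : ι → Type*} [∀ i, Lattice (L i)] [∀ i, OrderBot (L i)]
  {G : ∀ i, Set (L i)}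

lemma maximal_emb (hGbot : ∀ i, (⊥ : L i) ∉ G i) (X : ∀ j, L j) {j : ι} {z : L j}
    (hz : Maximal (· ∈ G j ∩ Set.Iic (X j)) z) :
    Maximal (· ∈ (⋃ i, latticeEmb L i '' G i) ∩ Set.Iic X) (latticeEmb L j z) := by
  constructor
  · exact ⟨Set.mem_iUnion.mpr ⟨j, Set.mem_image_of_mem _ hz.1.1⟩,
      (latticeEmb_le_iff L).mpr (le_trans (le_of_eq rfl) hz.1.2)⟩
  · rintro Y ⟨hY1, hY2⟩ hle
    obtain ⟨k, w, hw, rfl⟩ := by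
      simpa only [Set.mem_iUnion, Set.mem_image] using hY1
    have hzw : z ≤ latticeEmb L k w j := by
      have := hle j
      rwa [latticeEmb_apply_self] at this
    by_cases hjk : j = k
    · subst hjk
      rw [latticeEmb_apply_self] at hzw
      have hw' : w ≤ z := hz.2 ⟨hw, by
        have := (latticeEmb_le_iff L).mp hY2
        rwa [] at this⟩ hzw
      exact (latticeEmb_le_iff L).mpr (by rw [latticeEmb_apply_self]; exact hw')
    · exfalso
      rw [latticeEmb_apply_ne L hjk] at hzw
      have : z = ⊥ := le_antisymm hzw bot_le
      exact hGbot j (this ▸ hz.1.1)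

lemma maximal_emb_surj (hGbot : ∀ i, (⊥ : L i) ∉ G i) (X : ∀ j, L j) {Y : ∀ j, L j}
    (hY : Maximal (· ∈ (⋃ i, latticeEmb L i '' G i) ∩ Set.Iic X) Y) :
    ∃ (j : ι) (z : L j), Maximal (· ∈ G j ∩ Set.Iic (X j)) z ∧ latticeEmb L j z = Y := by
  obtain ⟨j, w, hw, rfl⟩ := by
    simpa only [Set.mem_iUnion, Set.mem_image] using hY.1.1
  refine ⟨j, w, ⟨⟨hw, by
    have := (latticeEmb_le_iff L).mp hY.1.2; exact this⟩, ?_⟩, rfl⟩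
  intro w' hw' hle
  have h2 : latticeEmb L j w ≤ latticeEmb L j w' :=
    (latticeEmb_le_iff L).mpr (by rw [latticeEmb_apply_self]; exact hle)
  have h3 : latticeEmb L j w' ≤ latticeEmb L j w :=
    hY.2 ⟨Set.mem_iUnion.mpr ⟨j, Set.mem_image_of_mem _ hw'.1⟩,
      (latticeEmb_le_iff L).mpr hw'.2⟩ h2
  have := h3 j
  rwa [latticeEmb_apply_self, latticeEmb_apply_self] at this

end Max

/-- If `G i` is a building set for the finite lattice `L i` for each `i`, then the union of the
`G i` (embedded into the product lattice) is a building set for the product lattice. -/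
theorem union_isBuildingSet_of_product {ι : Type*} [Fintype ι] [DecidableEq ι]
    (L : ι → Type*) [∀ i, Lattice (L i)] [∀ i, Fintype (L i)] [∀ i, OrderBot (L i)]
    (G : ∀ i, Set (L i)) (hG : ∀ i, IsBuildingSet (G i)) :
    IsBuildingSet (⋃ i, latticeEmb L i '' G i) := by
  have hGbot : ∀ i, (⊥ : L i) ∉ G i := fun i => (hG i).1
  constructor
  · intro h
    obtain ⟨i, x, hx, hbot⟩ := by simpa only [Set.mem_iUnion, Set.mem_image] using h
    have hxb : x = (⊥ : L i) := by
      simpa [latticeEmb_apply_self] using congrFun hbot i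
    exact hGbot i (hxb ▸ hx)
  · intro X
    -- index equivalence
    set GU := ⋃ i, latticeEmb L i '' G i with hGU
    let e : (Σ j, {z : L j // Maximal (· ∈ G j ∩ Set.Iic (X j)) z}) ≃
        {Z : ∀ j, L j // Maximal (· ∈ GU ∩ Set.Iic X) Z} := by
      refine Equiv.ofBijective
        (fun p => ⟨latticeEmb L p.1 p.2.1, maximal_emb hGbot X p.2.2⟩) ⟨?_, ?_⟩
      · rintro ⟨i, z, hz⟩ ⟨j, w, hw⟩ h
        have h' : latticeEmb L i z = latticeEmb L j w := congrArg Subtype.val h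
        have hznebot : z ≠ ⊥ := fun hb => hGbot i (hb ▸ hz.1.1)
        obtain rfl : i = j := latticeEmb_eq_emb L hznebot h'
        have := congrFun h' i
        rw [latticeEmb_apply_self, latticeEmb_apply_self] at this
        subst this
        rfl
      · rintro ⟨Y, hY⟩
        obtain ⟨j, z, hz, hzY⟩ := maximal_emb_surj hGbot X hY
        exact ⟨⟨j, z, hz⟩, Subtype.ext hzY⟩
    have i1 := iicPiOrderIso L X
    have i2 : ∀ j, Set.Iic (X j) ≃o
        ((z : {z : L j // Maximal (· ∈ G j ∩ Set.Iic (X j)) z}) → Set.Iic z.1) :=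
      fun j => ((hG j).2 (X j)).some
    have i3 : (∀ j, Set.Iic (X j)) ≃o
        (∀ j, (z : {z : L j // Maximal (· ∈ G j ∩ Set.Iic (X j)) z}) → Set.Iic z.1) :=
      piOrderIso (Equiv.refl ι) i2
    have i4 := (sigmaPiOrderIso
      (fun p : Σ j, {z : L j // Maximal (· ∈ G j ∩ Set.Iic (X j)) z} => Set.Iic p.2.1)).symm
    have i5 : (∀ p : Σ j, {z : L j // Maximal (· ∈ G j ∩ Set.Iic (X j)) z}, Set.Iic p.2.1) ≃o
        (∀ Z : {Z : ∀ j, L j // Maximal (· ∈ GU ∩ Set.Iic X) Z}, Set.Iic Z.1) :=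
      piOrderIso e (fun p => (iicEmbOrderIso L p.1 p.2.1).symm)
    exact ⟨((i1.trans i3).trans i4).trans i5⟩
end

section
/- Let V = (R^r/R)^{⊕n} with the vectors e_i^j as above, r ≥ 2. Then the union over all (a_1,...,a_n) ∈ (Z_r)^n of the cones {x_1 e_1^{a_1} + ... + x_n e_n^{a_n} : x_i ≥ 0} equals the union of the cones σ_Ĩ over all Z_r-decorated chains Ĩ. In other words, the support of the nested set fan Σ^r_n is the product of n copies of the support of the 1-dimensional fan with rays through e^0, ..., e^{r−1} in R^r/R. -/
open Finset

/-- The vector space `V = (ℝ^r/ℝ)^{⊕n}`, each factor the quotient of `ℝ^r` by the diagonal. -/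
abbrev Vrn (n r : ℕ) :=
  Fin n → ((Fin r → ℝ) ⧸ (Submodule.span ℝ {(fun _ => 1 : Fin r → ℝ)}))

/-- `e_i^j`: the image of the `j`-th standard basis vector in the `i`-th summand of `V`. -/
noncomputable def evec (n r : ℕ) (i : Fin n) (j : Fin r) : Vrn n r :=
  Pi.single i (Submodule.Quotient.mk (Pi.single j 1))

/-- A `Z_r`-decorated chain `∅ = I_0 ⊊ I_1 ⊊ ⋯ ⊊ I_ℓ ⊆ [n]` with decoration `a : I_ℓ → Z_r`.
The decoration is encoded by `a : Fin n → Option (Fin r)` whose support is exactly `I_ℓ`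
(the union of the `I j`). -/
structure DecChain (n r : ℕ) where
  len : ℕ
  I : Fin len → Finset (Fin n)
  strict : StrictMono I
  nonempty : ∀ j, (I j).Nonempty
  a : Fin n → Option (Fin r)
  dom : ∀ i, (a i).isSome ↔ ∃ j, i ∈ I j

/-- The generator `Σ_{i ∈ I_j} e_i^{-a(i)}` of the cone `σ_Ĩ`. -/
noncomputable def chainGen {n r : ℕ} (c : DecChain n r) (j : Fin c.len) : Vrn n r :=
  ∑ i ∈ c.I j, (c.a i).elim 0 (fun k => evec n r i (-k))

/-- The cone `σ_Ĩ`: nonnegative linear combinations of the generators. -/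
noncomputable def sigmaCone {n r : ℕ} (c : DecChain n r) : Set (Vrn n r) :=
  {v | ∃ coef : Fin c.len → ℝ, (∀ j, 0 ≤ coef j) ∧ v = ∑ j, coef j • chainGen c j}

lemma sum_smul_sum_eq {M : Type*} [AddCommMonoid M] [Module ℝ M] {ℓ n : ℕ}
    (coef : Fin ℓ → ℝ) (I : Fin ℓ → Finset (Fin n)) (f : Fin n → M) :
    ∑ j, coef j • ∑ i ∈ I j, f i =
      ∑ i, (∑ j ∈ univ.filter (fun j => i ∈ I j), coef j) • f i := by
  simp_rw [Finset.smul_sum, Finset.sum_smul]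
  calc ∑ j, ∑ i ∈ I j, coef j • f i
      = ∑ j, ∑ i : Fin n, if i ∈ I j then coef j • f i else 0 := by
        refine Finset.sum_congr rfl fun j _ => ?_
        rw [Finset.sum_ite_mem, Finset.univ_inter]
    _ = ∑ i : Fin n, ∑ j, if i ∈ I j then coef j • f i else 0 := Finset.sum_comm
    _ = ∑ i, ∑ j ∈ univ.filter (fun j => i ∈ I j), coef j • f i := by
        refine Finset.sum_congr rfl fun i _ => ?_
        rw [Finset.sum_filter]

/-- Telescoping: for `d : ℕ → ℝ` with `d n = 0`, for `m < n`,
`∑_{j : Fin n, m ≤ j} (d j - d (j+1)) = d m`. -/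
lemma telescope_fin {n : ℕ} (d : ℕ → ℝ) (hdn : d n = 0) (m : Fin n) :
    ∑ j ∈ univ.filter (fun j : Fin n => m ≤ j), (d j.val - d (j.val + 1)) = d m.val := by
  rw [Finset.sum_filter]
  have h1 : ∑ j : Fin n, (if m ≤ j then d j.val - d (j.val + 1) else 0)
      = ∑ k ∈ Finset.range n, (if m.val ≤ k then d k - d (k + 1) else 0) := by
    rw [← Fin.sum_univ_eq_sum_range (fun k => if m.val ≤ k then d k - d (k + 1) else 0)]
    refine Finset.sum_congr rfl fun j _ => ?_
    by_cases h : m ≤ j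
    · rw [if_pos h, if_pos (Fin.le_def.1 h)]
    · rw [if_neg h, if_neg (fun hh => h (Fin.le_def.2 hh))]
  rw [h1, ← Finset.sum_filter]
  have h2 : (Finset.range n).filter (fun k => m.val ≤ k) = Finset.Ico m.val n := by
    ext k; simp [Finset.mem_Ico]; omega
  rw [h2, Finset.sum_Ico_eq_sub _ (le_of_lt m.isLt),
    Finset.sum_range_sub' d, Finset.sum_range_sub' d, hdn]
  ring

/-- The union over all `(a_1,…,a_n) ∈ (Z_r)^n` of the cones
`{x_1 e_1^{a_1} + ⋯ + x_n e_n^{a_n} : x_i ≥ 0}` equals the union of the cones `σ_Ĩ` over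
all `Z_r`-decorated chains `Ĩ`: the support of the nested set fan `Σ^r_n` is the product of
`n` copies of the support of the fan with rays through `e^0, …, e^{r-1}` in `ℝ^r/ℝ`. -/
theorem support_nestedSetFan (n r : ℕ) (hr : 2 ≤ r) :
    (⋃ a : Fin n → Fin r,
        {v : Vrn n r | ∃ x : Fin n → ℝ, (∀ i, 0 ≤ x i) ∧
          v = ∑ i, x i • evec n r i (a i)}) =
      ⋃ c : DecChain n r, sigmaCone c := by
  haveI : NeZero r := ⟨by omega⟩
  ext v
  simp only [Set.mem_iUnion, Set.mem_setOf_eq]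
  constructor
  · rintro ⟨a₀, x, hx, rfl⟩
    -- sort x in decreasing order
    set σ : Equiv.Perm (Fin n) := Tuple.sort (fun j => -x j) with hσ
    have hmono : Monotone ((fun j => -x j) ∘ σ) := Tuple.monotone_sort _
    have hanti : ∀ {k k' : Fin n}, k ≤ k' → x (σ k') ≤ x (σ k) := by
      intro k k' h
      have := hmono h
      simp only [Function.comp_apply] at this
      linarith
    set d : ℕ → ℝ := fun k => if h : k < n then x (σ ⟨k, h⟩) else 0 with hd
    have hdn : d n = 0 := by simp [hd]
    have hdm : ∀ m : Fin n, d m.val = x (σ m) := by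
      intro m; simp [hd, m.isLt]
    refine ⟨⟨n, fun j => (Finset.Iic j).image σ, ?_, ?_,
      fun i => some (-(a₀ i)), ?_⟩,
      fun j => d j.val - d (j.val + 1), ?_, ?_⟩
    · -- strict
      intro j j' h
      constructor
      · exact Finset.image_subset_image (Finset.Iic_subset_Iic.2 h.le)
      · intro hsub
        have : σ j' ∈ (Finset.Iic j).image σ := hsub (Finset.mem_image_of_mem σ (Finset.mem_Iic.2 le_rfl))
        obtain ⟨k, hk, hk2⟩ := Finset.mem_image.1 this
        have : k = j' := σ.injective hk2
        subst this
        exact absurd (Finset.mem_Iic.1 hk) (not_le.2 h)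
    · intro j
      exact ⟨σ j, Finset.mem_image_of_mem σ (Finset.mem_Iic.2 le_rfl)⟩
    · intro i
      simp only [Option.isSome_some, true_iff]
      exact ⟨σ.symm i, Finset.mem_image.2 ⟨σ.symm i, Finset.mem_Iic.2 le_rfl, σ.apply_symm_apply i⟩⟩
    · -- coef nonneg
      intro j
      dsimp only
      by_cases h : j.val + 1 < n
      · have : d (j.val + 1) = x (σ ⟨j.val + 1, h⟩) := by simp [hd, h]
        rw [hdm j, this]
        have := hanti (k := j) (k' := ⟨j.val + 1, h⟩) (by simp [Fin.le_def])
        linarith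
      · have : d (j.val + 1) = 0 := by simp [hd, h]
        rw [hdm j, this]
        simpa using hx (σ j)
    · -- the sum equality
      simp only [chainGen]
      rw [sum_smul_sum_eq]
      refine Finset.sum_congr rfl fun i _ => ?_
      have hf : (Option.elim (some (-(a₀ i))) 0 fun k => evec n r i (-k)) = evec n r i (a₀ i) := by
        simp [neg_neg]
      rw [hf]
      congr 1
      have hfilter : (univ.filter (fun j : Fin n => i ∈ (Finset.Iic j).image σ))
          = univ.filter (fun j : Fin n => σ.symm i ≤ j) := by
        refine Finset.filter_congr fun j _ => ?_
        simp only [Finset.mem_image]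
        constructor
        · rintro ⟨k, hk, rfl0⟩
          have : k = σ.symm (σ k) := (σ.symm_apply_apply k).symm
          rw [← rfl0] at *
          rw [show σ.symm (σ k) = k from σ.symm_apply_apply k]
          exact Finset.mem_Iic.1 hk
        · intro h
          exact ⟨σ.symm i, Finset.mem_Iic.2 h, σ.apply_symm_apply i⟩
      rw [hfilter, telescope_fin d hdn (σ.symm i), hdm, σ.apply_symm_apply]
  · rintro ⟨c, coef, hcoef, rfl⟩
    refine ⟨fun i => -((c.a i).getD 0),
      fun i => ∑ j ∈ univ.filter (fun j => i ∈ c.I j), coef j,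
      fun i => Finset.sum_nonneg fun j _ => hcoef j, ?_⟩
    simp only [chainGen]
    rw [sum_smul_sum_eq]
    refine Finset.sum_congr rfl fun i _ => ?_
    rcases h : c.a i with _ | k
    · -- none: coefficient sum is zero
      have : (univ.filter (fun j => i ∈ c.I j)) = ∅ := by
        rw [Finset.filter_eq_empty_iff]
        intro j _ hj
        have := (c.dom i).2 ⟨j, hj⟩
        rw [h] at this
        simp at this
      rw [this]
      simp
    · simp [h, neg_neg]
end

section
/- For r ≥ 2 and n ≥ 0, the association Ĩ ↦ σ_Ĩ from Z_r-decorated chains of subsets of [n] to cones in V = (R^r/R)^{⊕n} is injective: distinct decorated chains give distinct cones. -/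
open Finset

----------------------------------------------------------------
-- auxiliary facts about the quotient ℝ^r/ℝ
----------------------------------------------------------------

abbrev Qr (r : ℕ) := (Fin r → ℝ) ⧸ (Submodule.span ℝ {(fun _ => 1 : Fin r → ℝ)})

lemma aux_scal (r : ℕ) (hr : 2 ≤ r) (t : ℝ) (ht : 0 ≤ t) (j j' : Fin r)
    (h : (Submodule.Quotient.mk (Pi.single j 1) : Qr r) = t • Submodule.Quotient.mk (Pi.single j' 1)) :
    j = j' ∧ t = 1 := by
  haveI : Nontrivial (Fin r) := Fin.nontrivial_iff_two_le.mpr hr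
  rw [← Submodule.Quotient.mk_smul, Submodule.Quotient.eq, Submodule.mem_span_singleton] at h
  obtain ⟨s, hs⟩ := h
  have hs' := fun x => congrFun hs x
  simp [Pi.single_apply] at hs'
  by_cases hjj : j = j'
  · subst hjj
    obtain ⟨j2, hj2⟩ := exists_ne j
    have h1 := hs' j
    have h2 := hs' j2
    simp [hj2] at h1 h2
    exact ⟨rfl, by linarith⟩
  · exfalso
    have h1 := hs' j
    have h2 := hs' j'
    simp [hjj, Ne.symm hjj] at h1 h2
    linarith

lemma aux_ne (r : ℕ) (hr : 2 ≤ r) (j : Fin r) :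
    (Submodule.Quotient.mk (Pi.single j 1) : Qr r) ≠ 0 := by
  haveI : Nontrivial (Fin r) := Fin.nontrivial_iff_two_le.mpr hr
  intro h
  rw [Submodule.Quotient.mk_eq_zero, Submodule.mem_span_singleton] at h
  obtain ⟨s, hs⟩ := h
  have hs' := fun x => congrFun hs x
  simp [Pi.single_apply] at hs'
  obtain ⟨j2, hj2⟩ := exists_ne j
  have h1 := hs' j
  have h2 := hs' j2
  simp [hj2] at h1 h2
  simp [h2] at h1

noncomputable def coordLF (r : ℕ) [NeZero r] (k : Fin r) : Qr r →ₗ[ℝ] ℝ :=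
  Submodule.liftQ _ ((LinearMap.proj (-k) : (Fin r → ℝ) →ₗ[ℝ] ℝ) - LinearMap.proj (-k + 1)) (by
    rw [Submodule.span_le]
    rintro x hx
    simp only [Set.mem_singleton_iff] at hx
    subst hx
    simp [SetLike.mem_coe, LinearMap.mem_ker])

lemma fin_one_ne_zero' (r : ℕ) [NeZero r] (hr : 2 ≤ r) : (1 : Fin r) ≠ 0 := by
  intro h
  have h2 := congrArg Fin.val h
  rw [Fin.val_one', Nat.mod_eq_of_lt (by omega)] at h2
  simp at h2

lemma coordLF_single (r : ℕ) [NeZero r] (hr : 2 ≤ r) (k : Fin r) :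
    coordLF r k (Submodule.Quotient.mk (Pi.single (-k) 1)) = 1 := by
  have hne : (-k + 1 : Fin r) ≠ -k := by
    intro h
    have : (1 : Fin r) = 0 := by
      have := congrArg (fun x => k + x) h
      simpa [add_comm, add_assoc, add_left_comm] using this
    exact fin_one_ne_zero' r hr this
  show Submodule.liftQ _ _ _ (Submodule.Quotient.mk (Pi.single (-k) 1)) = 1
  rw [Submodule.liftQ_apply]
  simp [Pi.single_apply, hne]

----------------------------------------------------------------
-- coordinates of cone elements
----------------------------------------------------------------

variable {n r : ℕ}

/-- the quotient class `e_i^{-a(i)}` (not yet placed in the `i`-th coordinate) -/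
noncomputable def wvec (c : DecChain n r) (i : Fin n) : Qr r :=
  (c.a i).elim 0 (fun k => Submodule.Quotient.mk (Pi.single (-k) 1))

lemma chainGen_apply (c : DecChain n r) (j : Fin c.len) (i : Fin n) :
    chainGen c j i = if i ∈ c.I j then wvec c i else 0 := by
  unfold chainGen
  rw [Finset.sum_apply]
  have : ∀ i' ∈ c.I j,
      ((c.a i').elim 0 (fun k => evec n r i' (-k))) i
        = if i = i' then wvec c i' else 0 := by
    intro i' _
    rcases h : c.a i' with _ | k
    · simp [wvec, h]
    · simp only [h, Option.elim, evec, wvec]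
      rw [Pi.single_apply]
  rw [Finset.sum_congr rfl this, Finset.sum_ite_eq]

lemma sum_coef_apply (c : DecChain n r) (coef : Fin c.len → ℝ) (i : Fin n) :
    (∑ j, coef j • chainGen c j) i
      = (∑ j, coef j * (if i ∈ c.I j then (1:ℝ) else 0)) • wvec c i := by
  rw [Finset.sum_apply, Finset.sum_smul]
  congr 1
  funext j
  rw [Pi.smul_apply, chainGen_apply]
  split <;> simp

lemma gen_mem (c : DecChain n r) (j : Fin c.len) : chainGen c j ∈ sigmaCone c := by
  refine ⟨fun j' => if j' = j then 1 else 0, fun j' => by by_cases h : j' = j <;> simp [h], ?_⟩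
  symm
  rw [Fintype.sum_eq_single j]
  · simp
  · intro b hb
    simp [hb]

lemma coef_sum_nonneg (c : DecChain n r) (coef : Fin c.len → ℝ) (h : ∀ j, 0 ≤ coef j) (i : Fin n) :
    0 ≤ ∑ j, coef j * (if i ∈ c.I j then (1:ℝ) else 0) := by
  apply Finset.sum_nonneg
  intro j _
  have := h j
  split <;> nlinarith

----------------------------------------------------------------
-- Step A : the decorations agree
----------------------------------------------------------------

lemma a_eq (hr : 2 ≤ r) (c c' : DecChain n r) (hσ : sigmaCone c = sigmaCone c') :
    c.a = c'.a := by
  haveI : NeZero r := ⟨by omega⟩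
  have key : ∀ (c c' : DecChain n r), sigmaCone c = sigmaCone c' →
      ∀ i k, c.a i = some k → ∃ k', c'.a i = some k' ∧ k = k' := by
    intro c c' hσ i k hk
    have hsome : (c.a i).isSome := by rw [hk]; rfl
    obtain ⟨j0, hj0⟩ := (c.dom i).mp hsome
    have hv : chainGen c j0 ∈ sigmaCone c' := hσ ▸ gen_mem c j0
    obtain ⟨coef', hc', hve⟩ := hv
    have hvi := congrFun hve i
    rw [sum_coef_apply, chainGen_apply, if_pos hj0] at hvi
    rcases hk' : c'.a i with _ | k'
    · exfalso
      simp only [wvec, hk, hk', Option.elim, smul_zero] at hvi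
      exact aux_ne r hr (-k) hvi
    · refine ⟨k', rfl, ?_⟩
      simp only [wvec, hk, hk', Option.elim] at hvi
      have := aux_scal r hr _ (coef_sum_nonneg c' coef' hc' i) (-k) (-k') hvi
      exact neg_injective this.1
  funext i
  rcases h : c.a i with _ | k
  · rcases h' : c'.a i with _ | k'
    · rfl
    · obtain ⟨k2, hk2, _⟩ := key c' c hσ.symm i k' h'
      rw [h] at hk2; cases hk2
  · obtain ⟨k', hk', hkk⟩ := key c c' hσ i k h
    rw [hk', hkk]

----------------------------------------------------------------
-- Step B : the combinatorial cones agree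
----------------------------------------------------------------

/-- The combinatorial cone generated by the indicator vectors of the chain. -/
noncomputable def Tcone (c : DecChain n r) : Set (Fin n → ℝ) :=
  {t | ∃ coef : Fin c.len → ℝ, (∀ j, 0 ≤ coef j) ∧
      t = fun i => ∑ j, coef j * (if i ∈ c.I j then (1:ℝ) else 0)}

noncomputable def Phi [NeZero r] (a : Fin n → Option (Fin r)) (v : Vrn n r) : Fin n → ℝ :=
  fun i => (a i).elim 0 (fun k => coordLF r k (v i))

lemma Phi_sum [NeZero r] (hr : 2 ≤ r) (c : DecChain n r) (coef : Fin c.len → ℝ) :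
    Phi c.a (∑ j, coef j • chainGen c j)
      = fun i => ∑ j, coef j * (if i ∈ c.I j then (1:ℝ) else 0) := by
  funext i
  unfold Phi
  rw [sum_coef_apply]
  rcases h : c.a i with _ | k
  · simp only [Option.elim]
    have : ∀ j ∈ (univ : Finset (Fin c.len)),
        coef j * (if i ∈ c.I j then (1:ℝ) else 0) = 0 := by
      intro j _
      have hni : i ∉ c.I j := by
        intro hij
        have : (c.a i).isSome := (c.dom i).mpr ⟨j, hij⟩
        rw [h] at this; simp at this
      simp [hni]
    rw [Finset.sum_congr rfl this]
    simp
  · simp only [Option.elim]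
    rw [wvec, h]
    simp only [Option.elim, map_smul]
    rw [coordLF_single r hr k]
    simp

lemma Tcone_eq [NeZero r] (hr : 2 ≤ r) (c c' : DecChain n r)
    (hσ : sigmaCone c = sigmaCone c') (ha : c.a = c'.a) : Tcone c = Tcone c' := by
  have key : ∀ (c c' : DecChain n r), sigmaCone c = sigmaCone c' → c.a = c'.a →
      Tcone c ⊆ Tcone c' := by
    intro c c' hσ ha t ht
    obtain ⟨coef, hc, rfl⟩ := ht
    have hv : (∑ j, coef j • chainGen c j) ∈ sigmaCone c' := by
      rw [← hσ]; exact ⟨coef, hc, rfl⟩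
    obtain ⟨coef', hc', hve⟩ := hv
    refine ⟨coef', hc', ?_⟩
    have hps := Phi_sum hr c coef
    rw [ha] at hps
    rw [← hps, hve, Phi_sum hr c' coef']
  exact Set.Subset.antisymm (key c c' hσ ha) (key c' c hσ.symm ha.symm)

----------------------------------------------------------------
-- Step C : recovering the chain from the combinatorial cone
----------------------------------------------------------------

lemma mem_I_mono (c : DecChain n r) {j j' : Fin c.len} (h : j ≤ j') {i : Fin n}
    (hi : i ∈ c.I j) : i ∈ c.I j' := c.strict.monotone h hi

/-- every nonempty superlevel set of an element of the cone is one of the `I j` -/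
lemma level_of_T (c : DecChain n r) {t : Fin n → ℝ} (ht : t ∈ Tcone c) {s : ℝ} (hs : 0 < s)
    {A : Finset (Fin n)} (hA : ∀ i, i ∈ A ↔ s ≤ t i) (hne : A.Nonempty) :
    ∃ j, c.I j = A := by
  obtain ⟨coef, hc, rfl⟩ := ht
  have hA' : ∀ i, i ∈ A ↔ s ≤ ∑ j, coef j * (if i ∈ c.I j then (1:ℝ) else 0) := fun i => hA i
  clear hA
  set F : Fin n → Finset (Fin c.len) := fun i => univ.filter (fun j => i ∈ c.I j) with hF
  have htF : ∀ i, (∑ j, coef j * (if i ∈ c.I j then (1:ℝ) else 0)) = ∑ j ∈ F i, coef j := by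
    intro i
    rw [hF, Finset.sum_filter]
    congr 1; funext j; split <;> simp
  set v : Fin c.len → ℝ := fun j => ∑ j' ∈ univ.filter (fun j' => j ≤ j'), coef j' with hv
  have suba : ∀ (i : Fin n) (j0 : Fin c.len), i ∈ c.I j0 →
      v j0 ≤ ∑ j ∈ F i, coef j := by
    intro i j0 hij0
    apply Finset.sum_le_sum_of_subset_of_nonneg
    · intro j hj
      rw [Finset.mem_filter] at hj ⊢
      exact ⟨mem_univ j, mem_I_mono c hj.2 hij0⟩
    · intro j _ _; exact hc j
  have subb : ∀ (i : Fin n) (h : (F i).Nonempty),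
      (∑ j ∈ F i, coef j) ≤ v ((F i).min' h) := by
    intro i h
    apply Finset.sum_le_sum_of_subset_of_nonneg
    · intro j hj
      rw [Finset.mem_filter]
      exact ⟨mem_univ j, Finset.min'_le _ _ hj⟩
    · intro j _ _; exact hc j
  have hFne : ∀ i ∈ A, (F i).Nonempty := by
    intro i hi
    by_contra hcon
    rw [Finset.not_nonempty_iff_eq_empty] at hcon
    have h1 := (hA' i).mp hi
    rw [htF i, hcon, Finset.sum_empty] at h1
    linarith
  obtain ⟨i0, hi0⟩ := hne
  set K : Finset (Fin c.len) := univ.filter (fun j => s ≤ v j) with hK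
  have hKne : K.Nonempty := by
    refine ⟨(F i0).min' (hFne i0 hi0), ?_⟩
    rw [hK, Finset.mem_filter]
    refine ⟨mem_univ _, ?_⟩
    have h1 := (hA' i0).mp hi0
    rw [htF i0] at h1
    linarith [subb i0 (hFne i0 hi0)]
  refine ⟨K.max' hKne, ?_⟩
  ext i
  rw [hA' i, htF i]
  constructor
  · intro hij
    have h1 := suba i _ hij
    have h2 : s ≤ v (K.max' hKne) := by
      have h3 := K.max'_mem hKne
      exact (Finset.mem_filter.mp h3).2
    linarith
  · intro hsi
    have hne' : (F i).Nonempty := by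
      by_contra hcon
      rw [Finset.not_nonempty_iff_eq_empty] at hcon
      rw [hcon, Finset.sum_empty] at hsi
      linarith
    have h1 := subb i hne'
    have hk1K : (F i).min' hne' ∈ K := by
      rw [hK, Finset.mem_filter]
      exact ⟨mem_univ _, by linarith⟩
    have hle := Finset.le_max' K _ hk1K
    have hmem : i ∈ c.I ((F i).min' hne') := by
      have h4 := (F i).min'_mem hne'
      exact (Finset.mem_filter.mp h4).2
    exact mem_I_mono c hle hmem

/-- every `I j` is a superlevel set of an element of the cone -/
lemma I_as_level (c : DecChain n r) (j : Fin c.len) :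
    ∃ t ∈ Tcone c, ∃ s : ℝ, 0 < s ∧ ∀ i, i ∈ c.I j ↔ s ≤ t i := by
  refine ⟨fun i => ∑ j', (1:ℝ) * (if i ∈ c.I j' then (1:ℝ) else 0),
    ⟨fun _ => 1, fun _ => zero_le_one, rfl⟩, ((c.len - j.val : ℕ) : ℝ), ?_, ?_⟩
  · have := j.2
    exact_mod_cast Nat.sub_pos_of_lt this
  · intro i
    show i ∈ c.I j ↔ ((c.len - j.val : ℕ) : ℝ) ≤ ∑ j', (1:ℝ) * (if i ∈ c.I j' then (1:ℝ) else 0)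
    have ht : (∑ j', (1:ℝ) * (if i ∈ c.I j' then (1:ℝ) else 0))
        = ((univ.filter (fun j' => i ∈ c.I j')).card : ℝ) := by
      simp only [one_mul]
      exact Finset.sum_boole _ _
    rw [ht]
    rw [Nat.cast_le]
    constructor
    · intro hij
      have hsub : Finset.Ici j ⊆ univ.filter (fun j' => i ∈ c.I j') := by
        intro j' hj'
        rw [Finset.mem_Ici] at hj'
        rw [Finset.mem_filter]
        exact ⟨mem_univ _, mem_I_mono c hj' hij⟩
      have hcard := Finset.card_le_card hsub
      rw [Fin.card_Ici] at hcard
      exact hcard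
    · intro hcard
      by_contra hni
      have hsub : univ.filter (fun j' => i ∈ c.I j') ⊆ Finset.Ioi j := by
        intro j' hj'
        rw [Finset.mem_filter] at hj'
        rw [Finset.mem_Ioi]
        by_contra hle
        push_neg at hle
        exact hni (mem_I_mono c hle hj'.2)
      have hcard2 := Finset.card_le_card hsub
      rw [Fin.card_Ioi] at hcard2
      have := j.2
      omega

noncomputable def Sfin (c : DecChain n r) : Finset (Finset (Fin n)) := univ.image c.I

lemma Sfin_card (c : DecChain n r) : (Sfin c).card = c.len := by
  rw [Sfin, Finset.card_image_of_injective _ c.strict.injective, card_univ, Fintype.card_fin]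

lemma pos_card (c : DecChain n r) (j : Fin c.len) :
    ((Sfin c).filter (fun A => A ⊂ c.I j)).card = j.val := by
  rw [Sfin, Finset.filter_image, Finset.card_image_of_injective _ c.strict.injective]
  have he : univ.filter (fun k => c.I k ⊂ c.I j) = Finset.Iio j := by
    ext k
    simp only [Finset.mem_filter, mem_univ, true_and, Finset.mem_Iio]
    rw [← Finset.lt_iff_ssubset]
    exact c.strict.lt_iff_lt
  rw [he, Fin.card_Iio]

lemma Sfin_eq (c c' : DecChain n r) (hT : Tcone c = Tcone c') : Sfin c = Sfin c' := by
  have key : ∀ c c' : DecChain n r, Tcone c = Tcone c' → Sfin c ⊆ Sfin c' := by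
    intro c c' hT A hA
    rw [Sfin, Finset.mem_image] at hA
    obtain ⟨j, _, rfl⟩ := hA
    obtain ⟨t, ht, s, hs, hlev⟩ := I_as_level c j
    obtain ⟨j', hj'⟩ := level_of_T c' (hT ▸ ht) hs hlev (c.nonempty j)
    rw [Sfin, Finset.mem_image]
    exact ⟨j', mem_univ _, hj'⟩
  exact Finset.Subset.antisymm (key c c' hT) (key c' c hT.symm)

----------------------------------------------------------------
-- main theorem
----------------------------------------------------------------

/-- For `r ≥ 2`, the association `Ĩ ↦ σ_Ĩ` from `Z_r`-decorated chains of subsets of `[n]`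
to cones in `V = (ℝ^r/ℝ)^{⊕n}` is injective. -/
theorem sigmaCone_injective (n r : ℕ) (hr : 2 ≤ r) :
    ∀ c c' : DecChain n r, sigmaCone c = sigmaCone c' → c = c' := by
  haveI : NeZero r := ⟨by omega⟩
  intro c c' hσ
  have ha : c.a = c'.a := a_eq hr c c' hσ
  have hT : Tcone c = Tcone c' := Tcone_eq hr c c' hσ ha
  have hS : Sfin c = Sfin c' := Sfin_eq c c' hT
  have hlen : c.len = c'.len := by rw [← Sfin_card c, ← Sfin_card c', hS]
  have hI : ∀ j : Fin c.len, c.I j = c'.I (Fin.cast hlen j) := by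
    intro j
    have hmem : c.I j ∈ Sfin c' := by
      rw [← hS, Sfin]; exact Finset.mem_image_of_mem _ (mem_univ j)
    rw [Sfin, Finset.mem_image] at hmem
    obtain ⟨j', _, hj'⟩ := hmem
    have hval : j'.val = j.val := by
      rw [← pos_card c j, ← pos_card c' j', hS, hj']
    have hcast : Fin.cast hlen j = j' := Fin.ext (by simp [hval])
    rw [hcast, hj']
  obtain ⟨len, I, st, ne, a, dom⟩ := c
  obtain ⟨len', I', st', ne', a', dom'⟩ := c'
  replace hlen : len = len' := hlen
  replace hI : ∀ j : Fin len, I j = I' (Fin.cast hlen j) := hI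
  replace ha : a = a' := ha
  subst hlen
  have hI' : I = I' := funext fun j => hI j
  subst hI'
  subst ha
  rfl
end
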